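/- Debiasing step, small-fusion-error case: Under the hypotheses of the debiasing-step basic inequality (δ̂ minimizes G(δ) = (1/(2n))‖ỹ − X(β̄ − δ)‖₂² + λ₂‖δ‖₁, v̂ = δ̂ − δ*, û = β̄ − (β^{(0)} + δ*), Σ̂ = X^⊤X/n, and ‖(1/n)X^⊤(ỹ − Xβ^{(0)})‖∞ ≤ λ₂/2), if additionally û^⊤ Σ̂ û ≤ λ₂‖δ*‖₁, then (1/4) v̂^⊤ Σ̂ v̂ ≤ 3λ₂‖δ*‖₁ and ‖v̂‖₁ ≤ 6‖δ*‖₁, hence also ‖v̂‖₂ ≤ 6‖δ*‖₁. -/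
import Mathlib

open Matrix Finset

noncomputable section

def l1 {ι : Type*} [Fintype ι] (v : ι → ℝ) : ℝ := ∑ j, |v j|
def l2sq {ι : Type*} [Fintype ι] (v : ι → ℝ) : ℝ := ∑ j, (v j) ^ 2
def l2 {ι : Type*} [Fintype ι] (v : ι → ℝ) : ℝ := Real.sqrt (l2sq v)
def linf {ι : Type*} [Fintype ι] (v : ι → ℝ) : ℝ := ⨆ j, |v j|

lemma l1_nonneg' {ι : Type*} [Fintype ι] (v : ι → ℝ) : 0 ≤ l1 v :=
  Finset.sum_nonneg fun _ _ => abs_nonneg _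

lemma l2sq_nonneg' {ι : Type*} [Fintype ι] (v : ι → ℝ) : 0 ≤ l2sq v :=
  Finset.sum_nonneg fun _ _ => sq_nonneg _

lemma l2sq_add' {ι : Type*} [Fintype ι] (a b : ι → ℝ) :
    l2sq (a + b) = l2sq a + 2 * (a ⬝ᵥ b) + l2sq b := by
  simp only [l2sq, dotProduct, Pi.add_apply, Finset.mul_sum, ← Finset.sum_add_distrib]
  exact Finset.sum_congr rfl fun j _ => by ring

lemma dot_self_eq_l2sq {ι : Type*} [Fintype ι] (v : ι → ℝ) : v ⬝ᵥ v = l2sq v := by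
  simp [l2sq, dotProduct, sq]

lemma dot_mulVec_eq {m k : ℕ} (M : Matrix (Fin m) (Fin k) ℝ) (a : Fin m → ℝ)
    (b : Fin k → ℝ) : a ⬝ᵥ (M *ᵥ b) = (Mᵀ *ᵥ a) ⬝ᵥ b := by
  rw [Matrix.dotProduct_mulVec, Matrix.mulVec_transpose]

lemma abs_dot_le_linf_l1 {ι : Type*} [Fintype ι] (u v : ι → ℝ) :
    |u ⬝ᵥ v| ≤ linf u * l1 v := by
  calc |∑ j, u j * v j| ≤ ∑ j, |u j * v j| := Finset.abs_sum_le_sum_abs _ _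
    _ = ∑ j, |u j| * |v j| := by simp [abs_mul]
    _ ≤ ∑ j, linf u * |v j| := by
        refine Finset.sum_le_sum fun j _ => ?_
        refine mul_le_mul_of_nonneg_right ?_ (abs_nonneg _)
        exact le_ciSup (f := fun j => |u j|) (Set.Finite.bddAbove (Set.finite_range _)) j
    _ = linf u * l1 v := by rw [l1, Finset.mul_sum]

lemma dot_le_sqrt_mul_sqrt {ι : Type*} [Fintype ι] (a b : ι → ℝ) :
    a ⬝ᵥ b ≤ Real.sqrt (l2sq a) * Real.sqrt (l2sq b) :=
  Real.sum_mul_le_sqrt_mul_sqrt Finset.univ a b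

lemma l2_le_l1' {ι : Type*} [Fintype ι] (v : ι → ℝ) : l2 v ≤ l1 v := by
  have h : l2sq v ≤ (l1 v) ^ 2 := by
    have h1 : l2sq v = ∑ j, |v j| ^ 2 := by simp [l2sq, sq_abs]
    rw [h1, l1]
    exact Finset.sum_sq_le_sq_sum_of_nonneg fun j _ => abs_nonneg (v j)
  calc l2 v ≤ Real.sqrt ((l1 v) ^ 2) := Real.sqrt_le_sqrt h
    _ = l1 v := Real.sqrt_sq (l1_nonneg' v)

theorem debias_lasso_small_fusion_error_case
    {n p : ℕ} (X : Matrix (Fin n) (Fin p) ℝ) (ytil : Fin n → ℝ)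
    (lam2 : ℝ) (hlam2 : 0 < lam2)
    (β0 βbar δstar δhat : Fin p → ℝ)
    (hmin : ∀ δ : Fin p → ℝ,
      (1 / (2 * (n : ℝ))) * l2sq (ytil - X *ᵥ (βbar - δhat)) + lam2 * l1 δhat ≤
      (1 / (2 * (n : ℝ))) * l2sq (ytil - X *ᵥ (βbar - δ)) + lam2 * l1 δ)
    (hE2 : linf ((n : ℝ)⁻¹ • (Xᵀ *ᵥ (ytil - X *ᵥ β0))) ≤ lam2 / 2)
    (hcase : (βbar - (β0 + δstar)) ⬝ᵥ (((n : ℝ)⁻¹ • (Xᵀ * X)) *ᵥ (βbar - (β0 + δstar)))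
        ≤ lam2 * l1 δstar) :
    ((1 / 4) * ((δhat - δstar) ⬝ᵥ (((n : ℝ)⁻¹ • (Xᵀ * X)) *ᵥ (δhat - δstar)))
        ≤ 3 * lam2 * l1 δstar) ∧
    (l1 (δhat - δstar) ≤ 6 * l1 δstar) ∧
    (l2 (δhat - δstar) ≤ 6 * l1 δstar) := by
  set c : ℝ := (n : ℝ)⁻¹ with hc
  have hc0 : 0 ≤ c := by positivity
  set V : Fin p → ℝ := δhat - δstar with hV
  set u : Fin p → ℝ := βbar - (β0 + δstar) with hu
  set r : Fin n → ℝ := ytil - X *ᵥ β0 with hr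
  set s : ℝ := l1 δstar with hs
  have hs0 : 0 ≤ s := l1_nonneg' _
  -- quadratic form identity
  have quadform : ∀ w : Fin p → ℝ,
      w ⬝ᵥ ((c • (Xᵀ * X)) *ᵥ w) = c * l2sq (X *ᵥ w) := by
    intro w
    rw [Matrix.smul_mulVec, dotProduct_smul, ← Matrix.mulVec_mulVec,
      dot_mulVec_eq, Matrix.transpose_transpose, dot_self_eq_l2sq, smul_eq_mul]
  set Q : ℝ := c * l2sq (X *ᵥ V) with hQ
  have hQ0 : 0 ≤ Q := mul_nonneg hc0 (l2sq_nonneg' _)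
  -- rewriting the residuals
  have ha : ytil - X *ᵥ (βbar - δstar) = r - X *ᵥ u := by
    rw [hr, hu]
    ext j
    simp [Matrix.mulVec_sub, Matrix.mulVec_add]
    ring
  have hb : ytil - X *ᵥ (βbar - δhat) = (r - X *ᵥ u) + X *ᵥ V := by
    rw [hr, hu, hV]
    ext j
    simp [Matrix.mulVec_sub, Matrix.mulVec_add]
    ring
  have hmin' := hmin δstar
  rw [ha, hb, l2sq_add'] at hmin'
  have hhalf : (1 : ℝ) / (2 * (n : ℝ)) = c / 2 := by
    rw [hc, one_div, mul_inv]; ring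
  rw [hhalf] at hmin'
  have hdotsplit : (r - X *ᵥ u) ⬝ᵥ (X *ᵥ V) = r ⬝ᵥ (X *ᵥ V) - (X *ᵥ u) ⬝ᵥ (X *ᵥ V) := by
    simp [sub_dotProduct]
  have expand : c / 2 * (l2sq (r - X *ᵥ u) + 2 * ((r - X *ᵥ u) ⬝ᵥ (X *ᵥ V)) + l2sq (X *ᵥ V))
      = c / 2 * l2sq (r - X *ᵥ u)
        + (c * (r ⬝ᵥ (X *ᵥ V)) - c * ((X *ᵥ u) ⬝ᵥ (X *ᵥ V))) + Q / 2 := by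
    rw [hdotsplit, hQ]; ring
  rw [expand] at hmin'
  -- bound 1 : Hölder
  have hT1 : -(c * (r ⬝ᵥ (X *ᵥ V))) ≤ lam2 / 2 * l1 V := by
    have hid : c * (r ⬝ᵥ (X *ᵥ V)) = (c • (Xᵀ *ᵥ r)) ⬝ᵥ V := by
      rw [dot_mulVec_eq, smul_dotProduct, smul_eq_mul]
    calc -(c * (r ⬝ᵥ (X *ᵥ V))) = -((c • (Xᵀ *ᵥ r)) ⬝ᵥ V) := by rw [hid]
      _ ≤ |(c • (Xᵀ *ᵥ r)) ⬝ᵥ V| := neg_le_abs _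
      _ ≤ linf (c • (Xᵀ *ᵥ r)) * l1 V := abs_dot_le_linf_l1 _ _
      _ ≤ lam2 / 2 * l1 V := mul_le_mul_of_nonneg_right hE2 (l1_nonneg' _)
  -- bound 2 : Cauchy-Schwarz + case hypothesis + AM-GM
  have hTu : c * l2sq (X *ᵥ u) ≤ lam2 * s := by rw [← quadform u]; exact hcase
  have hT2 : c * ((X *ᵥ u) ⬝ᵥ (X *ᵥ V)) ≤ Q / 4 + lam2 * s := by
    have hcs := dot_le_sqrt_mul_sqrt (X *ᵥ u) (X *ᵥ V)
    have h1 : c * ((X *ᵥ u) ⬝ᵥ (X *ᵥ V)) ≤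
        Real.sqrt (c * l2sq (X *ᵥ u)) * Real.sqrt Q := by
      rw [hQ, Real.sqrt_mul hc0, Real.sqrt_mul hc0]
      calc c * ((X *ᵥ u) ⬝ᵥ (X *ᵥ V))
          ≤ c * (Real.sqrt (l2sq (X *ᵥ u)) * Real.sqrt (l2sq (X *ᵥ V))) :=
            mul_le_mul_of_nonneg_left hcs hc0
        _ = (Real.sqrt c * Real.sqrt c)
            * (Real.sqrt (l2sq (X *ᵥ u)) * Real.sqrt (l2sq (X *ᵥ V))) := by
            rw [Real.mul_self_sqrt hc0]
        _ = Real.sqrt c * Real.sqrt (l2sq (X *ᵥ u))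
            * (Real.sqrt c * Real.sqrt (l2sq (X *ᵥ V))) := by ring
    have h2 : Real.sqrt (c * l2sq (X *ᵥ u)) ≤ Real.sqrt (lam2 * s) := Real.sqrt_le_sqrt hTu
    have h3 : Real.sqrt (c * l2sq (X *ᵥ u)) * Real.sqrt Q ≤ Real.sqrt (lam2 * s) * Real.sqrt Q :=
      mul_le_mul_of_nonneg_right h2 (Real.sqrt_nonneg _)
    have hQsq : (Real.sqrt Q) ^ 2 = Q := Real.sq_sqrt hQ0
    have hlssq : (Real.sqrt (lam2 * s)) ^ 2 = lam2 * s := Real.sq_sqrt (by positivity)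
    nlinarith [sq_nonneg (Real.sqrt Q / 2 - Real.sqrt (lam2 * s)), h1, h3, hQsq, hlssq]
  -- triangle inequality
  have htri : l1 V ≤ l1 δhat + s := by
    rw [hV, hs, l1, l1, l1, ← Finset.sum_add_distrib]
    refine Finset.sum_le_sum fun j _ => ?_
    simpa [sub_eq_add_neg] using abs_add_le (δhat j) (-(δstar j))
  have htri' : lam2 * l1 V ≤ lam2 * (l1 δhat + s) :=
    mul_le_mul_of_nonneg_left htri hlam2.le
  have hVdouble : lam2 * l1 V = 2 * (lam2 / 2 * l1 V) := by ring
  have hsdouble : lam2 * (l1 δhat + s) = lam2 * l1 δhat + lam2 * s := by ring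
  -- combine
  have key : Q / 4 + lam2 / 2 * l1 V ≤ 3 * (lam2 * s) := by linarith
  have h2 : l1 V ≤ 6 * s := by
    by_contra hcon
    push_neg at hcon
    have hmul : lam2 * (6 * s) < lam2 * l1 V := mul_lt_mul_of_pos_left hcon hlam2
    linarith only [key, hQ0, hmul]
  refine ⟨?_, ?_, ?_⟩
  · rw [quadform V, ← hQ]
    have hpos : 0 ≤ lam2 / 2 * l1 V := mul_nonneg (by linarith only [hlam2]) (l1_nonneg' V)
    linarith only [key, hpos]
  · exact h2
  · exact (l2_le_l1' V).trans h2
end
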